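/- Let L be a candidate (a strict Lusin scheme on ω^ω × ω^ω such that {L_b} is a π-net for ω^ω × ω^ω and each L_b has nonempty Baire-interior). Then there exists a strategy σ with property (★): for every pair c = (c⁰, c¹) of finite sequences, there is a finite sequence b such that S_{c⁰} × S_{c¹} ⊇ L_b ⊇ S_{σ⁰(c)} × S_{σ¹(c)}, and for all k < len(b), no tail ⋃_{j≥l} L_{(b↾k)⌢j} is contained in (S_{σ⁰(c)}↑ × S_{σ¹(c)}) ∪ (S_{σ⁰(c)} × (S_{σ¹(c)}↑)). -/
import Mathlib


open Set Topology

/-- The restriction `p↾n` of `p : ω^ω` as a list of length `n`. -/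
def restrict (p : ℕ → ℕ) (n : ℕ) : List ℕ := List.ofFn (fun i : Fin n => p i)

/-- `a ⊑ p` : the finite sequence `a` is an initial segment of `p : ω^ω`. -/
def ExtendsL (a : List ℕ) (p : ℕ → ℕ) : Prop := restrict p a.length = a

/-- `a ⊏ b` : proper initial segment for finite sequences. -/
def SPrefix (a b : List ℕ) : Prop := a <+: b ∧ a ≠ b

/-- The standard Lusin scheme: `S_a = {p ∈ ω^ω : a ⊑ p}`. -/
def Sset (a : List ℕ) : Set (ℕ → ℕ) := {p | ExtendsL a p}

/-- The `k`-tail of `L_a` : `⋃_{j ≥ k} L_{a⌢j}`. -/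
def tailL {X : Type*} (L : List ℕ → Set X) (a : List ℕ) (k : ℕ) : Set X :=
  ⋃ j, ⋃ (_ : k ≤ j), L (a ++ [j])

/-- `shoot_L(a) ⋐ U` : some tail of `L_a` is contained in `U`. -/
def Inn {X : Type*} (L : List ℕ → Set X) (a : List ℕ) (U : Set X) : Prop :=
  ∃ k, tailL L a k ⊆ U

/-- A strict Lusin scheme on a set `X` : conditions (L0)–(L4). -/
def StrictLusin {X : Type*} (L : List ℕ → Set X) : Prop :=
  (∀ a n, L (a ++ [n]) ⊆ L a) ∧
  (∀ a n m, n ≠ m → L (a ++ [n]) ∩ L (a ++ [m]) = ∅) ∧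
  (L [] = Set.univ) ∧
  (∀ a, L a = ⋃ n, L (a ++ [n])) ∧
  (∀ p : ℕ → ℕ, ∃ x, (⋂ n, L (restrict p n)) = {x})

/-- A Lusin π-base for the space `(X, t)` : an open strict Lusin scheme with (L6). -/
def IsLusinPiBase {X : Type*} (t : TopologicalSpace X) (L : List ℕ → Set X) : Prop :=
  StrictLusin L ∧ (∀ a, IsOpen[t] (L a)) ∧
  ∀ p : X, ∀ U ∈ @nhds X t p, ∃ a k, p ∈ L a ∧ tailL L a k ⊆ U

/-- A π-net for `(X, t)` : nonempty sets, one inside every nonempty open set. -/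
def IsPiNet {X : Type*} (t : TopologicalSpace X) (γ : Set (Set X)) : Prop :=
  (∀ G ∈ γ, G.Nonempty) ∧ ∀ U, IsOpen[t] U → U.Nonempty → ∃ G ∈ γ, G ⊆ U

/-- Strict lexicographic order `◁` on `ω^ω`. -/
def lexLt (p q : ℕ → ℕ) : Prop := ∃ n, restrict p n = restrict q n ∧ p n < q n

/-- `p⇣ = {p} ∪ {q : p ◁ q}`. -/
def down (p : ℕ → ℕ) : Set (ℕ → ℕ) := insert p {q | lexLt p q}

/-- `A↑ = ⋃_{p ∈ A} p⇣`. -/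
def upSet (A : Set (ℕ → ℕ)) : Set (ℕ → ℕ) := ⋃ p ∈ A, down p

/-- `Ŝ_p(M, g) = {p} ∪ ⋃_{m ∈ M} ⋃_{j ≥ g(m)} S_{(p↾m)⌢j}`. -/
def Shat (p : ℕ → ℕ) (M : Set ℕ) (g : ℕ → ℕ) : Set (ℕ → ℕ) :=
  insert p (⋃ m ∈ M, tailL Sset (restrict p m) (g m))

/-- A free filter on `ω` : a proper filter (all members nonempty) whose members
have empty intersection. -/
def FreeFilter (F : Filter ℕ) : Prop := F.NeBot ∧ ⋂₀ F.sets = ∅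

/-- The topology `τ_F` generated by the subbase of all sets `Ŝ_p(M, g)`, `M ∈ F_p`. -/
def tauF (F : (ℕ → ℕ) → Filter ℕ) : TopologicalSpace (ℕ → ℕ) :=
  TopologicalSpace.generateFrom
    {U | ∃ p M g, M ∈ F p ∧ U = Shat p M g}

/-- A game: two interleaved strictly increasing sequences of pairs of finite sequences. -/
structure Game where
  c : ℕ → List ℕ × List ℕ
  d : ℕ → List ℕ × List ℕ
  hcd0 : ∀ n, SPrefix (c n).1 (d n).1
  hdc0 : ∀ n, SPrefix (d n).1 (c (n + 1)).1
  hcd1 : ∀ n, SPrefix (c n).2 (d n).2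
  hdc1 : ∀ n, SPrefix (d n).2 (c (n + 1)).2

/-- `(r0, r1)` is the result of the game `Γ`. -/
def Game.IsResult (Γ : Game) (r0 r1 : ℕ → ℕ) : Prop :=
  ∀ n, ExtendsL (Γ.c n).1 r0 ∧ ExtendsL (Γ.c n).2 r1

/-- A strategy: a pair of maps producing proper extensions. -/
structure Strategy where
  s0 : List ℕ × List ℕ → List ℕ
  s1 : List ℕ × List ℕ → List ℕ
  h0 : ∀ c, SPrefix c.1 (s0 c)
  h1 : ∀ c, SPrefix c.2 (s1 c)

/-- The game `Γ` follows the strategy `σ`. -/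
def Game.Follows (Γ : Game) (σ : Strategy) : Prop :=
  ∀ n, (Γ.d n).1 = σ.s0 (Γ.c n) ∧ (Γ.d n).2 = σ.s1 (Γ.c n)

/-- A candidate: a strict Lusin scheme on `ω^ω × ω^ω` whose members form a π-net
for the Baire product and have nonempty interior there. -/
def IsCandidate (L : List ℕ → Set ((ℕ → ℕ) × (ℕ → ℕ))) : Prop :=
  StrictLusin L ∧
  IsPiNet (inferInstance : TopologicalSpace ((ℕ → ℕ) × (ℕ → ℕ))) {S | ∃ b, S = L b} ∧
  ∀ b, (interior (L b)).Nonempty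


lemma length_restrict (p : ℕ → ℕ) (n : ℕ) : (restrict p n).length = n := by
  simp [_root_.restrict]

lemma mem_Sset_iff {a : List ℕ} {p : ℕ → ℕ} :
    p ∈ Sset a ↔ ∀ i (h : i < a.length), p i = a[i] := by
  constructor
  · intro hp i h
    have hp' : restrict p a.length = a := hp
    have h2 := List.getElem_of_eq hp'.symm h
    simpa [_root_.restrict] using h2.symm
  · intro h
    show restrict p a.length = a
    apply List.ext_getElem (by simp [_root_.restrict])
    intro i h1 h2
    simpa [_root_.restrict] using h i h2

lemma Sset_anti {a b : List ℕ} (h : a <+: b) : Sset b ⊆ Sset a := by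
  intro p hp
  rw [mem_Sset_iff] at hp ⊢
  intro i hi
  obtain ⟨t, rfl⟩ := h
  rw [hp i (lt_of_lt_of_le hi (by simp)), List.getElem_append_left hi]

lemma eq_of_mem_Sset_concat {a : List ℕ} {N : ℕ} {p : ℕ → ℕ}
    (hp : p ∈ Sset (a ++ [N])) : p a.length = N := by
  have := mem_Sset_iff.mp hp a.length (by simp)
  simpa using this

lemma default_mem_Sset (a : List ℕ) : (fun i => a.getD i 0) ∈ Sset a := by
  rw [mem_Sset_iff]; intro i hi; exact List.getD_eq_getElem a 0 hi

lemma Sset_nonempty (a : List ℕ) : (Sset a).Nonempty := ⟨_, default_mem_Sset a⟩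

lemma restrict_succ (p : ℕ → ℕ) (n : ℕ) : restrict p (n+1) = restrict p n ++ [p n] := by
  rw [_root_.restrict, List.ofFn_succ', List.concat_eq_append]
  rfl

lemma restrict_prefix (p : ℕ → ℕ) {m n : ℕ} (h : m ≤ n) :
    restrict p m <+: restrict p n := by
  induction n, h using Nat.le_induction with
  | base => exact List.prefix_refl _
  | succ n hmn ih =>
    refine ih.trans ?_
    rw [restrict_succ]
    exact List.prefix_append _ _

lemma isOpen_Sset (a : List ℕ) : IsOpen (Sset a) := by
  have : Sset a = PiNat.cylinder (fun i => a.getD i 0) a.length := by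
    ext p
    rw [PiNat.mem_cylinder_iff, mem_Sset_iff]
    constructor
    · intro h i hi; rw [h i hi, List.getD_eq_getElem _ _ hi]
    · intro h i hi; rw [h i hi, List.getD_eq_getElem _ _ hi]
  rw [this]
  exact PiNat.isOpen_cylinder (E := fun _ : ℕ => ℕ) _ _

lemma exists_restrict_subset {u : Set (ℕ → ℕ)} {x : ℕ → ℕ} (hu : IsOpen u) (hx : x ∈ u) :
    ∃ n, Sset (restrict x n) ⊆ u := by
  obtain ⟨v, ⟨y, n, rfl⟩, hxv, hvu⟩ :=
    (PiNat.isTopologicalBasis_cylinders (fun _ : ℕ => ℕ)).exists_subset_of_mem_open hx hu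
  refine ⟨n, fun p hp => hvu ?_⟩
  rw [PiNat.mem_cylinder_iff] at hxv ⊢
  intro i hi
  have hpi : p i = x i := by
    have := mem_Sset_iff.mp hp i (by rw [length_restrict]; exact hi)
    simpa [_root_.restrict] using this
  rw [hpi]; exact hxv i hi

def GoodP (L : List ℕ → Set ((ℕ → ℕ) × (ℕ → ℕ))) (a0 a1 e : List ℕ) : Prop :=
  ∀ l, ∃ j, l ≤ j ∧ ∃ z ∈ L (e ++ [j]), z.1 ∉ Sset a0 ∧ z.2 ∉ Sset a1

lemma GoodP.mono {L : List ℕ → Set ((ℕ → ℕ) × (ℕ → ℕ))} {a0 a1 a0' a1' e : List ℕ}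
    (h : GoodP L a0 a1 e) (h0 : a0 <+: a0') (h1 : a1 <+: a1') : GoodP L a0' a1' e := by
  intro l
  obtain ⟨j, hj, z, hz, hx, hy⟩ := h l
  exact ⟨j, hj, z, hz, fun hc => hx (Sset_anti h0 hc), fun hc => hy (Sset_anti h1 hc)⟩

lemma goodP_step (L : List ℕ → Set ((ℕ → ℕ) × (ℕ → ℕ))) (hne : ∀ b, (L b).Nonempty)
    (a0 a1 e : List ℕ) : ∃ N M : ℕ, GoodP L (a0 ++ [N]) (a1 ++ [M]) e := by
  choose z hz using fun j => hne (e ++ [j])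
  obtain ⟨⟨v, w⟩, hvw⟩ := Finite.exists_infinite_fiber
    (fun j : ℕ => ((((z j).1 a0.length == 0), ((z j).2 a1.length == 0)) : Bool × Bool))
  have hinf : {j : ℕ | (((z j).1 a0.length == 0), ((z j).2 a1.length == 0)) = (v, w)}.Infinite :=
    Set.infinite_coe_iff.mp hvw
  refine ⟨cond v 1 0, cond w 1 0, fun l => ?_⟩
  obtain ⟨j, hj, hl⟩ := hinf.exists_gt l
  have hj1 : (((z j).1 a0.length == 0) : Bool) = v := congrArg Prod.fst hj
  have hj2 : (((z j).2 a1.length == 0) : Bool) = w := congrArg Prod.snd hj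
  refine ⟨j, hl.le, z j, hz j, ?_, ?_⟩
  · intro hc
    have h1 := eq_of_mem_Sset_concat hc
    cases v <;> simp_all
  · intro hc
    have h1 := eq_of_mem_Sset_concat hc
    cases w <;> simp_all

lemma goodP_iterate (L : List ℕ → Set ((ℕ → ℕ) × (ℕ → ℕ))) (hne : ∀ b, (L b).Nonempty)
    (es : List (List ℕ)) : ∀ a0 a1 : List ℕ,
    ∃ a0' a1', a0 <+: a0' ∧ a1 <+: a1' ∧ ∀ e ∈ es, GoodP L a0' a1' e := by
  induction es with
  | nil => exact fun a0 a1 => ⟨a0, a1, List.prefix_refl _, List.prefix_refl _, by simp⟩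
  | cons e es ih =>
    intro a0 a1
    obtain ⟨N, M, hG⟩ := goodP_step L hne a0 a1 e
    obtain ⟨a0', a1', h0, h1, hall⟩ := ih (a0 ++ [N]) (a1 ++ [M])
    refine ⟨a0', a1', (List.prefix_append _ _).trans h0, (List.prefix_append _ _).trans h1, ?_⟩
    intro e' he'
    rcases List.mem_cons.1 he' with rfl | he'
    · exact hG.mono h0 h1
    · exact hall e' he'

lemma goodP_not_inn {L : List ℕ → Set ((ℕ → ℕ) × (ℕ → ℕ))} {a0 a1 e : List ℕ}
    (h : GoodP L a0 a1 e) :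
    ¬ Inn L e ((upSet (Sset a0) ×ˢ Sset a1) ∪ (Sset a0 ×ˢ upSet (Sset a1))) := by
  rintro ⟨l, hl⟩
  obtain ⟨j, hj, z, hz, hx, hy⟩ := h l
  have hzt : z ∈ tailL L e l := Set.mem_iUnion.2 ⟨j, Set.mem_iUnion.2 ⟨hj, hz⟩⟩
  rcases hl hzt with h' | h'
  · exact hy h'.2
  · exact hx h'.1

theorem stmt16_aux (L : List ℕ → Set ((ℕ → ℕ) × (ℕ → ℕ)))
    (hSL : IsPiNet (inferInstance : TopologicalSpace ((ℕ → ℕ) × (ℕ → ℕ))) {S | ∃ b, S = L b})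
    (hInt : ∀ b, (interior (L b)).Nonempty) :
    ∃ σ : Strategy, ∀ c : List ℕ × List ℕ, ∃ b : List ℕ,
      L b ⊆ Sset c.1 ×ˢ Sset c.2 ∧
      Sset (σ.s0 c) ×ˢ Sset (σ.s1 c) ⊆ L b ∧
      ∀ k < b.length,
        ¬ Inn L (b.take k)
          ((upSet (Sset (σ.s0 c)) ×ˢ Sset (σ.s1 c)) ∪
            (Sset (σ.s0 c) ×ˢ upSet (Sset (σ.s1 c)))) := by
  have hne : ∀ b, (L b).Nonempty := fun b => hSL.1 (L b) ⟨b, rfl⟩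
  have key : ∀ c : List ℕ × List ℕ, ∃ a0 a1 : List ℕ,
      SPrefix c.1 a0 ∧ SPrefix c.2 a1 ∧ ∃ b : List ℕ,
      L b ⊆ Sset c.1 ×ˢ Sset c.2 ∧ Sset a0 ×ˢ Sset a1 ⊆ L b ∧
      ∀ k < b.length, ¬ Inn L (b.take k)
        ((upSet (Sset a0) ×ˢ Sset a1) ∪ (Sset a0 ×ˢ upSet (Sset a1))) := by
    intro c
    obtain ⟨G, ⟨b, rfl⟩, hb⟩ := hSL.2 (Sset c.1 ×ˢ Sset c.2)
      ((isOpen_Sset _).prod (isOpen_Sset _)) ((Sset_nonempty _).prod (Sset_nonempty _))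
    obtain ⟨z, hz⟩ := hInt b
    obtain ⟨u, v, hu, hv, hzu, hzv, huv⟩ := isOpen_prod_iff.1 isOpen_interior z.1 z.2 hz
    obtain ⟨n1, hn1⟩ := exists_restrict_subset hu hzu
    obtain ⟨n2, hn2⟩ := exists_restrict_subset hv hzv
    set n : ℕ := max (max n1 n2) (max c.1.length c.2.length) with hn
    have hzL : z ∈ L b := interior_subset hz
    have hzc := hb hzL
    have hc0 : c.1 <+: restrict z.1 n := by
      have h1 : restrict z.1 c.1.length = c.1 := hzc.1
      rw [← h1]; exact restrict_prefix _ (by omega)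
    have hc1 : c.2 <+: restrict z.2 n := by
      have h1 : restrict z.2 c.2.length = c.2 := hzc.2
      rw [← h1]; exact restrict_prefix _ (by omega)
    have hA : Sset (restrict z.1 n) ×ˢ Sset (restrict z.2 n) ⊆ L b := by
      refine Set.Subset.trans (Set.prod_mono ?_ ?_) ((Set.Subset.trans huv) interior_subset)
      · exact Set.Subset.trans (Sset_anti (restrict_prefix _ (by omega))) hn1
      · exact Set.Subset.trans (Sset_anti (restrict_prefix _ (by omega))) hn2
    obtain ⟨a0', a1', h0, h1, hall⟩ := goodP_iterate L hne
      ((List.range b.length).map (b.take ·)) (restrict z.1 n) (restrict z.2 n)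
    refine ⟨a0' ++ [0], a1' ++ [0], ?_, ?_, b, hb, ?_, ?_⟩
    · refine ⟨hc0.trans (h0.trans (List.prefix_append _ _)), ?_⟩
      intro heq
      have hl1 := congrArg List.length heq
      have hl2 := h0.length_le
      simp [length_restrict] at hl1 hl2
      omega
    · refine ⟨hc1.trans (h1.trans (List.prefix_append _ _)), ?_⟩
      intro heq
      have hl1 := congrArg List.length heq
      have hl2 := h1.length_le
      simp [length_restrict] at hl1 hl2
      omega
    · refine Set.Subset.trans (Set.prod_mono ?_ ?_) hA
      · exact Set.Subset.trans (Sset_anti (List.prefix_append _ _)) (Sset_anti h0)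
      · exact Set.Subset.trans (Sset_anti (List.prefix_append _ _)) (Sset_anti h1)
    · intro k hk
      have hmem : b.take k ∈ (List.range b.length).map (b.take ·) :=
        List.mem_map.2 ⟨k, List.mem_range.2 hk, rfl⟩
      exact goodP_not_inn ((hall _ hmem).mono (List.prefix_append _ _) (List.prefix_append _ _))
  choose s0 s1 hp0 hp1 hmain using key
  exact ⟨⟨s0, s1, hp0, hp1⟩, hmain⟩

/-- For every candidate `L` there is a strategy `σ` with property (★). -/
theorem stmt16 (L : List ℕ → Set ((ℕ → ℕ) × (ℕ → ℕ))) (hL : IsCandidate L) :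
    ∃ σ : Strategy, ∀ c : List ℕ × List ℕ, ∃ b : List ℕ,
      L b ⊆ Sset c.1 ×ˢ Sset c.2 ∧
      Sset (σ.s0 c) ×ˢ Sset (σ.s1 c) ⊆ L b ∧
      ∀ k < b.length,
        ¬ Inn L (b.take k)
          ((upSet (Sset (σ.s0 c)) ×ˢ Sset (σ.s1 c)) ∪
            (Sset (σ.s0 c) ×ˢ upSet (Sset (σ.s1 c)))) := by
  obtain ⟨-, hPi, hInt⟩ := hL
  exact stmt16_aux L hPi hInt
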